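/- For d ≥ 0, q a primitive (d+1)-th root of unity in F, and ε ∈ F not among 1,q,…,q^d: ∑_{j=0}^{d} (ε;q)_j/(εq;q)_j = (q;q)_d/(εq;q)_d. -/

import Mathlib

/-- The q-Pochhammer symbol `(a;q)_r = (1-a)(1-aq)⋯(1-aq^{r-1})`. -/
def qpoch {F : Type*} [Field F] (a q : F) (r : ℕ) : F :=
  ∏ ℓ ∈ Finset.range r, (1 - a * q ^ ℓ)

/-!
Since `(ε;q)_{j+1} = (1-ε)(εq;q)_j`, the `j`-th summand is `(1-ε)/(1-εq^j)`, while
`(1-ε)(εq;q)_d = (ε;q)_{d+1} = 1-ε^{d+1}` and `(q;q)_d = d+1`. So the identity is `∑_{j ≤ d} 1/(1-εq^j) = (d+1)/(1-ε^{d+1})`, which follows by expanding each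
`(1-ε^{d+1})/(1-εq^j)` as a geometric sum in `εq^j` and using orthogonality of the powers of `q`.
-/

open Finset

section RootOfUnity

variable {R : Type*} [CommRing R] {n : ℕ} {q : R}

lemma mul_pow_pow_of_pow_eq_one (hq : q ^ n = 1) (x : R) (j : ℕ) : (x * q ^ j) ^ n = x ^ n := by
  rw [mul_pow, ← pow_mul, mul_comm j, pow_mul, hq, one_pow, mul_one]

lemma one_sub_mul_pow_ne_zero (hq : q ^ n = 1) {x : R} (hx : x ^ n ≠ 1) (j : ℕ) :
    1 - x * q ^ j ≠ 0 := fun h => by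
  rw [← mul_pow_pow_of_pow_eq_one hq x j, ← sub_eq_zero.mp h, one_pow] at hx
  exact hx rfl

end RootOfUnity

namespace IsPrimitiveRoot

lemma prod_range_one_sub_mul_pow {R : Type*} [CommRing R] [IsDomain R] {n : ℕ} {q : R}
    (hq : IsPrimitiveRoot q n) (hn : 0 < n) (x : R) :
    ∏ i ∈ range n, (1 - x * q ^ i) = 1 - x ^ n := by
  have h := congrArg (Polynomial.eval 1) (X_pow_sub_C_eq_prod hq hn (rfl : x ^ n = x ^ n))
  simpa [Polynomial.eval_prod, mul_comm x] using h.symm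

variable {F : Type*} [Field F] {n : ℕ} {q : F}

lemma sum_range_pow_pow (hq : IsPrimitiveRoot q n) {k : ℕ} (hk : k < n) :
    ∑ j ∈ range n, (q ^ k) ^ j = if k = 0 then (n : F) else 0 := by
  split_ifs with hk0
  · simp [hk0]
  · have hqk : q ^ k ≠ 1 := hq.pow_ne_one_of_pos_of_lt hk0 hk
    rw [geom_sum_eq hqk, ← pow_mul, mul_comm, pow_mul, hq.pow_eq_one, one_pow, sub_self,
      zero_div]

lemma sum_range_inv_one_sub_mul_pow (hq : IsPrimitiveRoot q n) {x : F} (hx : x ^ n ≠ 1) :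
    ∑ j ∈ range n, (1 - x * q ^ j)⁻¹ = n / (1 - x ^ n) := by
  have hgeom : ∀ j, (1 - x * q ^ j)⁻¹ = (∑ k ∈ range n, x ^ k * (q ^ k) ^ j) / (1 - x ^ n) := by
    intro j
    have hterm : ∀ k, x ^ k * (q ^ k) ^ j = (x * q ^ j) ^ k := fun k => by
      rw [mul_pow, ← pow_mul, ← pow_mul, mul_comm j]
    rw [eq_div_iff (sub_ne_zero.mpr hx.symm), sum_congr rfl fun k _ => hterm k,
      ← mul_pow_pow_of_pow_eq_one hq.pow_eq_one x j,
      ← mul_neg_geom_sum, inv_mul_cancel_left₀ (one_sub_mul_pow_ne_zero hq.pow_eq_one hx j)]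
  rw [sum_congr rfl fun j _ => hgeom j, ← sum_div, sum_comm]
  simp only [← mul_sum]
  rw [sum_congr rfl fun k hk => by rw [hq.sum_range_pow_pow (mem_range.mp hk)]]
  rcases n.eq_zero_or_pos with rfl | hn
  · simp
  · simp [hn]

end IsPrimitiveRoot

section qpoch

variable {F : Type*} [Field F]

lemma qpoch_succ (a q : F) (r : ℕ) : qpoch a q (r + 1) = qpoch a q r * (1 - a * q ^ r) :=
  prod_range_succ _ r

lemma qpoch_succ' (a q : F) (r : ℕ) : qpoch a q (r + 1) = (1 - a) * qpoch (a * q) q r := by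
  simp only [qpoch, prod_range_succ', pow_succ', pow_zero, mul_one, mul_assoc]
  exact mul_comm _ _

lemma qpoch_ne_zero {a q : F} (h : ∀ m, 1 - a * q ^ m ≠ 0) (r : ℕ) : qpoch a q r ≠ 0 :=
  prod_ne_zero_iff.mpr fun m _ => h m

lemma qpoch_div_qpoch_mul {a q : F} (h : ∀ m, 1 - a * q ^ m ≠ 0) (r : ℕ) :
    qpoch a q r / qpoch (a * q) q r = (1 - a) / (1 - a * q ^ r) := by
  have hr : qpoch (a * q) q r ≠ 0 :=
    right_ne_zero_of_mul (qpoch_succ' a q r ▸ qpoch_ne_zero h (r + 1))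
  rw [div_eq_div_iff hr (h r), ← qpoch_succ, qpoch_succ']

lemma qpoch_of_isPrimitiveRoot {n : ℕ} {q : F} (hq : IsPrimitiveRoot q n) (hn : 0 < n) (a : F) :
    qpoch a q n = 1 - a ^ n :=
  hq.prod_range_one_sub_mul_pow hn a

lemma qpoch_self_of_isPrimitiveRoot {d : ℕ} {q : F} (hq : IsPrimitiveRoot q (d + 1)) :
    qpoch q q d = d + 1 := by
  simp only [qpoch, ← pow_succ']
  exact hq.prod_one_sub_pow_eq_order

end qpoch

theorem stmt5 {F : Type*} [Field F] (d : ℕ) (q ε : F)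
    (hq : IsPrimitiveRoot q (d + 1))
    (hε : ∀ i : ℕ, i ≤ d → ε ≠ q ^ i) :
    ∑ j ∈ Finset.range (d + 1), qpoch ε q j / qpoch (ε * q) q j =
      qpoch q q d / qpoch (ε * q) q d := by
  have hεn : ε ^ (d + 1) ≠ 1 := fun h => by
    obtain ⟨i, hi, hqi⟩ := hq.eq_pow_of_pow_eq_one h
    exact hε i (Nat.le_of_lt_succ hi) hqi.symm
  have hne := one_sub_mul_pow_ne_zero hq.pow_eq_one hεn
  have hden : (1 - ε) * qpoch (ε * q) q d = 1 - ε ^ (d + 1) := by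
    rw [← qpoch_succ', qpoch_of_isPrimitiveRoot hq d.succ_pos]
  have hε1 : 1 - ε ≠ 0 := by simpa using hne 0
  calc ∑ j ∈ range (d + 1), qpoch ε q j / qpoch (ε * q) q j
      = (1 - ε) * ∑ j ∈ range (d + 1), (1 - ε * q ^ j)⁻¹ := by
        simp only [qpoch_div_qpoch_mul hne, div_eq_mul_inv, mul_sum]
    _ = (1 - ε) * ((d + 1) / (1 - ε ^ (d + 1))) := by
        rw [hq.sum_range_inv_one_sub_mul_pow hεn, Nat.cast_succ]
    _ = qpoch q q d / qpoch (ε * q) q d := by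
        rw [qpoch_self_of_isPrimitiveRoot hq, ← hden]
        field_simp
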